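/- Let G be a 2-tightly connected r-uniform hypergraph, let ℓ ≥ 1, and let β be a coloring of all pairs of vertices of an n-vertex set with colors in [ℓ]. For each t ∈ [ℓ] let γ_t be a map from the n vertices to V(F), and define H to be the r-graph whose edges are all r-sets X such that for some t ∈ [ℓ], every pair inside X has β-color t and γ_t maps X bijectively onto an edge of F. Then H is G-free. -/

import Mathlib

/-- `G` is `k`-tightly connected: its edges can be ordered so that every edge after the
first meets some earlier edge in at least `k` vertices. -/
def TightlyConn {γ : Type*} [DecidableEq γ] (k : ℕ) (GE : Finset (Finset γ)) : Prop :=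
  ∃ l : List (Finset γ), l.Nodup ∧ (∀ e, e ∈ GE ↔ e ∈ l) ∧
    ∀ i : Fin l.length, 0 < (i : ℕ) →
      ∃ j : Fin l.length, (j : ℕ) < (i : ℕ) ∧ k ≤ (l.get i ∩ l.get j).card

/-- The coloring construction of Theorem 1.4 is `G`-free: color all pairs of an
`n`-vertex set `V` by `c` with colors in `[ℓ]`, pick maps `γt t : V → V(F)`, and let `H`
have as edges all `r`-sets `X` such that, for some color `t`, all pairs inside `X` have
color `t` and `γt t` maps `X` bijectively onto an edge of `F`.  If `G` is `2`-tightly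
connected `r`-uniform and not homomorphic to `F`, then `H` contains no copy of `G`. -/
theorem stmt_12 {γ δ V : Type*} [DecidableEq γ] [DecidableEq δ] [DecidableEq V]
    (r : ℕ) (GE : Finset (Finset γ)) (FE : Finset (Finset δ))
    (hGr : ∀ e ∈ GE, e.card = r) (hFr : ∀ e ∈ FE, e.card = r)
    (htc : TightlyConn 2 GE)
    (hnh : ¬ ∃ φ : γ → δ, ∀ e ∈ GE, e.image φ ∈ FE ∧ Set.InjOn φ ↑e)
    (ℓ : ℕ) (hℓ : 1 ≤ ℓ) (c : Sym2 V → Fin ℓ) (γt : Fin ℓ → V → δ) :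
    ¬ ∃ φ : γ → V, Function.Injective φ ∧ ∀ e ∈ GE,
      (e.image φ) ∈ {X : Finset V | X.card = r ∧ ∃ t : Fin ℓ,
        (∀ u ∈ X, ∀ v ∈ X, u ≠ v → c s(u, v) = t) ∧
        X.image (γt t) ∈ FE ∧ (X.image (γt t)).card = r} := by
  rintro ⟨φ, hinj, hed⟩
  simp only [Set.mem_setOf_eq] at hed
  obtain ⟨l, -, hmem, hconn⟩ := htc
  rcases Nat.eq_zero_or_pos l.length with hl | hl
  · refine hnh ⟨fun a => γt ⟨0, hℓ⟩ (φ a), fun e he => ?_⟩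
    have := (hmem e).1 he
    rw [List.length_eq_zero_iff.mp hl] at this
    simp at this
  · have h0 : l.get ⟨0, hl⟩ ∈ GE := (hmem _).2 (l.get_mem _)
    obtain ⟨-, t0, hp0, hF0, hc0⟩ := hed _ h0
    -- key: every edge in the list is valid with color t0
    have key : ∀ n, ∀ hn : n < l.length,
        (∀ u ∈ (l.get ⟨n, hn⟩).image φ, ∀ v ∈ (l.get ⟨n, hn⟩).image φ, u ≠ v →
          c s(u, v) = t0) ∧
        ((l.get ⟨n, hn⟩).image φ).image (γt t0) ∈ FE ∧
        (((l.get ⟨n, hn⟩).image φ).image (γt t0)).card = r := by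
      intro n
      induction n using Nat.strong_induction_on with
      | _ n ih =>
        intro hn
        rcases Nat.eq_zero_or_pos n with rfl | hnpos
        · exact ⟨hp0, hF0, hc0⟩
        · obtain ⟨j, hji, hcard⟩ := hconn ⟨n, hn⟩ hnpos
          obtain ⟨hpj, hFj, hcj⟩ := ih j hji j.isLt
          have hiGE : l.get ⟨n, hn⟩ ∈ GE := (hmem _).2 (l.get_mem _)
          obtain ⟨-, ti, hpi, hFi, hci⟩ := hed _ hiGE
          obtain ⟨u, hu, v, hv, huv⟩ := Finset.one_lt_card.mp hcard
          have hui := (Finset.mem_inter.mp hu).1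
          have huj := (Finset.mem_inter.mp hu).2
          have hvi := (Finset.mem_inter.mp hv).1
          have hvj := (Finset.mem_inter.mp hv).2
          have hne : φ u ≠ φ v := fun h => huv (hinj h)
          have h1 : c s(φ u, φ v) = ti :=
            hpi _ (Finset.mem_image_of_mem φ hui) _ (Finset.mem_image_of_mem φ hvi) hne
          have h2 : c s(φ u, φ v) = t0 :=
            hpj _ (Finset.mem_image_of_mem φ huj) _ (Finset.mem_image_of_mem φ hvj) hne
          have : ti = t0 := h1 ▸ h2
          subst this
          exact ⟨hpi, hFi, hci⟩
    refine hnh ⟨fun a => γt t0 (φ a), fun e he => ?_⟩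
    obtain ⟨i, hi⟩ := List.get_of_mem ((hmem e).1 he)
    obtain ⟨-, hF, hc⟩ := key i i.isLt
    have him : e.image (fun a => γt t0 (φ a)) = (e.image φ).image (γt t0) := by
      rw [Finset.image_image]; rfl
    have hi' : l.get ⟨(i : ℕ), i.isLt⟩ = e := by
      simpa using hi
    rw [hi'] at hF hc
    refine ⟨him ▸ hF, Finset.card_image_iff.mp ?_⟩
    rw [him, hc, hGr e he]
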